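/- For every natural number n ≥ 0 and every propositional formula θ over P (built from atoms in P using only ¬ and ∧), the PPLTL formula ⋁_{0 ≤ i ≤ n+1} (θ ∧ Yⁱ(start)) is equivalent to the LTLf formula ⋁_{0 ≤ i ≤ n+1} Xⁱ(θ ∧ end), where Y⁰φ = φ, Y^{i+1}φ = Y(Yⁱφ), X⁰ψ = ψ, X^{i+1}ψ = X(Xⁱψ): for every finite nonempty trace τ over P, τ ⊨ ⋁_{0 ≤ i ≤ n+1} (θ ∧ Yⁱ(start)) if and only if τ ⊨ ⋁_{0 ≤ i ≤ n+1} Xⁱ(θ ∧ end). -/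

import Mathlib

inductive PPLTL (P : Type) : Type
  | atom : P → PPLTL P
  | neg : PPLTL P → PPLTL P
  | conj : PPLTL P → PPLTL P → PPLTL P
  | yesterday : PPLTL P → PPLTL P
  | since : PPLTL P → PPLTL P → PPLTL P

namespace PPLTL

variable {P : Type}

/-- Satisfaction of a pure-past LTL formula on the trace `τ` at instant `i`
(for a trace `s₀ ⋯ sₙ`, satisfaction at `i ≤ n` only depends on `s₀, …, sᵢ`). -/
def Sat (τ : ℕ → Set P) : PPLTL P → ℕ → Prop
  | atom p, i => p ∈ τ i
  | neg φ, i => ¬ Sat τ φ i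
  | conj φ ψ, i => Sat τ φ i ∧ Sat τ ψ i
  | yesterday φ, i => 1 ≤ i ∧ Sat τ φ (i - 1)
  | since φ ψ, i => ∃ k, k ≤ i ∧ Sat τ ψ k ∧ ∀ j, k < j → j ≤ i → Sat τ φ j

/-- Disjunction: `φ ∨ ψ ≡ ¬(¬φ ∧ ¬ψ)`. -/
def por (φ ψ : PPLTL P) : PPLTL P := neg (conj (neg φ) (neg ψ))

/-- Implication: `φ → ψ ≡ ¬φ ∨ ψ`. -/
def pimp (φ ψ : PPLTL P) : PPLTL P := por (neg φ) ψ

/-- `true ≡ p ∨ ¬p`. -/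
def ptrue (p : P) : PPLTL P := por (atom p) (neg (atom p))

/-- Once: `O φ ≡ true S φ`. -/
def ponce (p : P) (φ : PPLTL P) : PPLTL P := since (ptrue p) φ

/-- Historically: `H φ ≡ ¬O¬φ`. -/
def phist (p : P) (φ : PPLTL P) : PPLTL P := neg (ponce p (neg φ))

/-- Weak yesterday: `WY φ ≡ ¬Y¬φ`. -/
def pwy (φ : PPLTL P) : PPLTL P := neg (yesterday (neg φ))

/-- Start: `start ≡ ¬Y true`. -/
def pstart (p : P) : PPLTL P := neg (yesterday (ptrue p))

end PPLTL

inductive LTLf (P : Type) : Type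
  | atom : P → LTLf P
  | neg : LTLf P → LTLf P
  | conj : LTLf P → LTLf P → LTLf P
  | next : LTLf P → LTLf P
  | until_ : LTLf P → LTLf P → LTLf P

namespace LTLf

variable {P : Type}

/-- Satisfaction of an LTLf formula at instant `i` on the finite trace
`s₀ ⋯ sₙ` given by `τ` and the last index `n`. -/
def Sat (τ : ℕ → Set P) (n : ℕ) : LTLf P → ℕ → Prop
  | atom p, i => p ∈ τ i
  | neg ψ, i => ¬ Sat τ n ψ i
  | conj ψ₁ ψ₂, i => Sat τ n ψ₁ i ∧ Sat τ n ψ₂ i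
  | next ψ, i => i < n ∧ Sat τ n ψ (i + 1)
  | until_ ψ₁ ψ₂, i =>
      ∃ k, i ≤ k ∧ k ≤ n ∧ Sat τ n ψ₂ k ∧ ∀ j, i ≤ j → j < k → Sat τ n ψ₁ j

/-- Disjunction: `ψ₁ ∨ ψ₂ ≡ ¬(¬ψ₁ ∧ ¬ψ₂)`. -/
def lor (ψ₁ ψ₂ : LTLf P) : LTLf P := neg (conj (neg ψ₁) (neg ψ₂))

/-- Implication: `ψ₁ → ψ₂ ≡ ¬ψ₁ ∨ ψ₂`. -/
def limp (ψ₁ ψ₂ : LTLf P) : LTLf P := lor (neg ψ₁) ψ₂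

/-- Biconditional. -/
def liff (ψ₁ ψ₂ : LTLf P) : LTLf P := conj (limp ψ₁ ψ₂) (limp ψ₂ ψ₁)

/-- `true ≡ p ∨ ¬p`. -/
def ltrue (p : P) : LTLf P := lor (atom p) (neg (atom p))

/-- Eventually: `F ψ ≡ true U ψ`. -/
def ev (p : P) (ψ : LTLf P) : LTLf P := until_ (ltrue p) ψ

/-- Always: `G ψ ≡ ¬F¬ψ`. -/
def alw (p : P) (ψ : LTLf P) : LTLf P := neg (ev p (neg ψ))

/-- Weak next: `WX ψ ≡ ¬X¬ψ`. -/
def wnext (ψ : LTLf P) : LTLf P := neg (next (neg ψ))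

/-- Release: `ψ₁ R ψ₂ ≡ ¬(¬ψ₁ U ¬ψ₂)`. -/
def release (ψ₁ ψ₂ : LTLf P) : LTLf P := neg (until_ (neg ψ₁) (neg ψ₂))

/-- End of the trace: `end ≡ ¬X true`. -/
def lend (p : P) : LTLf P := neg (next (ltrue p))

end LTLf

/-- Propositional formulas over `P`, built from atoms using only ¬ and ∧. -/
inductive PropForm (P : Type) : Type
  | atom : P → PropForm P
  | neg : PropForm P → PropForm P
  | conj : PropForm P → PropForm P → PropForm P

namespace PropForm

variable {P : Type}

/-- Some atom occurring in a propositional formula (used to express the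
abbreviation `true ≡ p ∨ ¬p`). -/
def someAtom : PropForm P → P
  | atom p => p
  | neg θ => someAtom θ
  | conj θ _ => someAtom θ

/-- A propositional formula read as a PPLTL formula. -/
def toPPLTL : PropForm P → PPLTL P
  | atom p => PPLTL.atom p
  | neg θ => PPLTL.neg θ.toPPLTL
  | conj θ₁ θ₂ => PPLTL.conj θ₁.toPPLTL θ₂.toPPLTL

/-- A propositional formula read as an LTLf formula. -/
def toLTLf : PropForm P → LTLf P
  | atom p => LTLf.atom p
  | neg θ => LTLf.neg θ.toLTLf
  | conj θ₁ θ₂ => LTLf.conj θ₁.toLTLf θ₂.toLTLf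

end PropForm

/-- Iterated yesterday: `Y⁰φ = φ`, `Y^{i+1}φ = Y(Yⁱφ)`. -/
def iterY {P : Type} : ℕ → PPLTL P → PPLTL P
  | 0, φ => φ
  | i + 1, φ => .yesterday (iterY i φ)

/-- Iterated next: `X⁰ψ = ψ`, `X^{i+1}ψ = X(Xⁱψ)`. -/
def iterX {P : Type} : ℕ → LTLf P → LTLf P
  | 0, ψ => ψ
  | i + 1, ψ => .next (iterX i ψ)

/-- The disjunction `⋁_{0 ≤ i ≤ k} f i` of PPLTL formulas. -/
def orUpToP {P : Type} (f : ℕ → PPLTL P) : ℕ → PPLTL P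
  | 0 => f 0
  | k + 1 => PPLTL.por (orUpToP f k) (f (k + 1))

/-- The disjunction `⋁_{0 ≤ i ≤ k} f i` of LTLf formulas. -/
def orUpToF {P : Type} (f : ℕ → LTLf P) : ℕ → LTLf P
  | 0 => f 0
  | k + 1 => LTLf.lor (orUpToF f k) (f (k + 1))

/-!
Both formulas say that θ holds at the last instant `m` and that `m ≤ n + 1`: on the past side
`Yⁱ start` holds exactly at instant `i`, and on the future side `Xⁱ end`, read at instant `0`,
holds exactly when the last instant is `i`.
-/

def PropForm.Eval {P : Type} (s : Set P) : PropForm P → Prop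
  | .atom p => p ∈ s
  | .neg θ => ¬ θ.Eval s
  | .conj θ₁ θ₂ => θ₁.Eval s ∧ θ₂.Eval s

namespace PPLTL

variable {P : Type} (τ : ℕ → Set P)

@[simp]
theorem sat_por (φ ψ : PPLTL P) (i : ℕ) : Sat τ (por φ ψ) i ↔ Sat τ φ i ∨ Sat τ ψ i := by
  simp only [por, Sat]
  tauto

@[simp]
theorem sat_ptrue (p : P) (i : ℕ) : Sat τ (ptrue p) i := by
  simp only [ptrue, sat_por, Sat]
  tauto

@[simp]
theorem sat_pstart (p : P) (i : ℕ) : Sat τ (pstart p) i ↔ i = 0 := by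
  simp only [pstart, Sat, sat_ptrue, and_true]
  omega

theorem sat_iterY (k : ℕ) (φ : PPLTL P) (i : ℕ) :
    Sat τ (iterY k φ) i ↔ k ≤ i ∧ Sat τ φ (i - k) := by
  induction k generalizing i with
  | zero => simp [iterY]
  | succ k ih =>
    simp only [iterY, Sat, ih, Nat.sub_sub, Nat.add_comm 1 k, ← and_assoc]
    exact and_congr_left fun _ => by omega

theorem sat_iterY_pstart (k : ℕ) (p : P) (i : ℕ) : Sat τ (iterY k (pstart p)) i ↔ i = k := by
  simp only [sat_iterY, sat_pstart]
  omega

theorem sat_orUpToP (f : ℕ → PPLTL P) (k i : ℕ) :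
    Sat τ (orUpToP f k) i ↔ ∃ j ≤ k, Sat τ (f j) i := by
  induction k with
  | zero => simp [orUpToP]
  | succ k ih => simp only [orUpToP, sat_por, ih, Nat.le_succ_iff, or_and_right, exists_or,
      exists_eq_left]

theorem sat_toPPLTL (θ : PropForm P) (i : ℕ) : Sat τ θ.toPPLTL i ↔ θ.Eval (τ i) := by
  induction θ with
  | atom p => rfl
  | neg θ ih => exact not_congr ih
  | conj θ₁ θ₂ ih₁ ih₂ => exact and_congr ih₁ ih₂

theorem sat_orUpToP_conj_iterY_pstart (φ : PPLTL P) (p : P) (k i : ℕ) :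
    Sat τ (orUpToP (fun j => conj φ (iterY j (pstart p))) k) i ↔ i ≤ k ∧ Sat τ φ i := by
  simp only [sat_orUpToP, Sat, sat_iterY_pstart]
  constructor
  · rintro ⟨j, hj, hφ, rfl⟩
    exact ⟨hj, hφ⟩
  · rintro ⟨hi, hφ⟩
    exact ⟨i, hi, hφ, rfl⟩

end PPLTL

namespace LTLf

variable {P : Type} (τ : ℕ → Set P) (n : ℕ)

@[simp]
theorem sat_lor (ψ₁ ψ₂ : LTLf P) (i : ℕ) :
    Sat τ n (lor ψ₁ ψ₂) i ↔ Sat τ n ψ₁ i ∨ Sat τ n ψ₂ i := by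
  simp only [lor, Sat]
  tauto

@[simp]
theorem sat_ltrue (p : P) (i : ℕ) : Sat τ n (ltrue p) i := by
  simp only [ltrue, sat_lor, Sat]
  tauto

@[simp]
theorem sat_lend (p : P) (i : ℕ) : Sat τ n (lend p) i ↔ n ≤ i := by
  simp only [lend, Sat, sat_ltrue, and_true, not_lt]

theorem sat_iterX (k : ℕ) (ψ : LTLf P) {i : ℕ} (hi : i ≤ n) :
    Sat τ n (iterX k ψ) i ↔ i + k ≤ n ∧ Sat τ n ψ (i + k) := by
  induction k generalizing i with
  | zero => simp [iterX, hi]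
  | succ k ih =>
    rw [iterX, Sat, show i + (k + 1) = i + 1 + k by omega]
    constructor
    · rintro ⟨hin, hψ⟩
      exact (ih hin).1 hψ
    · rintro ⟨hk, hψ⟩
      exact ⟨by omega, (ih (by omega)).2 ⟨hk, hψ⟩⟩

theorem sat_orUpToF (f : ℕ → LTLf P) (k i : ℕ) :
    Sat τ n (orUpToF f k) i ↔ ∃ j ≤ k, Sat τ n (f j) i := by
  induction k with
  | zero => simp [orUpToF]
  | succ k ih => simp only [orUpToF, sat_lor, ih, Nat.le_succ_iff, or_and_right, exists_or,
      exists_eq_left]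

theorem sat_toLTLf (θ : PropForm P) (i : ℕ) : Sat τ n θ.toLTLf i ↔ θ.Eval (τ i) := by
  induction θ with
  | atom p => rfl
  | neg θ ih => exact not_congr ih
  | conj θ₁ θ₂ ih₁ ih₂ => exact and_congr ih₁ ih₂

theorem sat_orUpToF_iterX_conj_lend (ψ : LTLf P) (p : P) (k : ℕ) :
    Sat τ n (orUpToF (fun j => iterX j (conj ψ (lend p))) k) 0 ↔ n ≤ k ∧ Sat τ n ψ n := by
  simp only [sat_orUpToF, sat_iterX τ n _ _ n.zero_le, Nat.zero_add, Sat, sat_lend]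
  constructor
  · rintro ⟨j, hj, hjn, hψ, hnj⟩
    obtain rfl := le_antisymm hjn hnj
    exact ⟨hj, hψ⟩
  · rintro ⟨hn, hψ⟩
    exact ⟨n, hn, le_rfl, hψ, le_rfl⟩

end LTLf

open PPLTL LTLf in
/-- For every `n ≥ 0` and propositional formula θ, the PPLTL
formula `⋁_{0 ≤ i ≤ n+1} (θ ∧ Yⁱ(start))` is equivalent to the LTLf formula
`⋁_{0 ≤ i ≤ n+1} Xⁱ(θ ∧ end)`. -/
theorem hold_after_equiv {P : Type} (n : ℕ) (θ : PropForm P) (τ : ℕ → Set P) (m : ℕ) :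
    PPLTL.Sat τ
        (orUpToP (fun i => .conj θ.toPPLTL (iterY i (pstart θ.someAtom))) (n + 1)) m ↔
      LTLf.Sat τ m
        (orUpToF (fun i => iterX i (.conj θ.toLTLf (lend θ.someAtom))) (n + 1)) 0 := by
  rw [sat_orUpToP_conj_iterY_pstart, sat_orUpToF_iterX_conj_lend, sat_toPPLTL, sat_toLTLf]
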